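/- arXiv:0903.5161 — 2 statements merged into one kernel-verified Lean document; each statement's English description precedes it below -/
import Mathlib

section
/- Let ρ : [0,1] → [0,1] be continuous with ρ(t) ≤ f_α^{-1}(t) = αt/(1-(1-α)t) for all t, and let ζ ∈ (α,1). If (x_n) is a sequence in [0,1] with (1-ζ) + ζ·ρ(x_n) - x_n → 0 and limsup x_n < 1, then every accumulation point x of (x_n) satisfies x ≤ f_α(t_ζ) = (1-ζ)/(1-α). -/
open Filter

theorem accumulation_points_below_crossing (α ζ : ℝ) (hα : α ∈ Set.Ioo (0:ℝ) 1)
    (hζ : ζ ∈ Set.Ioo α 1) (ρ : ℝ → ℝ) (hρcont : ContinuousOn ρ (Set.Icc 0 1))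
    (hρle : ∀ t ∈ Set.Icc (0:ℝ) 1, ρ t ≤ α * t / (1 - (1 - α) * t))
    (x : ℕ → ℝ) (hx : ∀ n, x n ∈ Set.Icc (0:ℝ) 1)
    (hconv : Filter.Tendsto (fun n => (1 - ζ) + ζ * ρ (x n) - x n) Filter.atTop (nhds 0))
    (hlimsup : Filter.limsup x Filter.atTop < 1) :
    ∀ a : ℝ, MapClusterPt a Filter.atTop x → a ≤ (1 - ζ) / (1 - α) := by
  intro a ha
  obtain ⟨ψ, hψ, htend⟩ := TopologicalSpace.FirstCountableTopology.tendsto_subseq ha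
  -- a ∈ [0,1]
  have haI : a ∈ Set.Icc (0:ℝ) 1 :=
    isClosed_Icc.mem_of_tendsto htend (Eventually.of_forall fun n => hx (ψ n))
  -- a ≤ limsup < 1
  have ha1 : a < 1 := by
    by_contra h
    push_neg at h
    obtain ⟨c, hc1, hc2⟩ := exists_between hlimsup
    have hev : ∀ᶠ n in atTop, x n < c := eventually_lt_of_limsup_lt hc1
      (isBoundedUnder_of ⟨1, fun n => (hx n).2⟩)
    have hev2 : ∀ᶠ n in atTop, c < x (ψ n) :=
      htend.eventually (eventually_gt_nhds (lt_of_lt_of_le hc2 h))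
    obtain ⟨n, hn1, hn2⟩ := ((hψ.tendsto_atTop.eventually hev).and hev2).exists
    exact absurd hn1 (not_lt.2 hn2.le)
  -- limit equation
  have hρa : Tendsto (fun n => ρ (x (ψ n))) atTop (nhds (ρ a)) :=
    ((hρcont a haI).tendsto).comp
      (tendsto_nhdsWithin_iff.2 ⟨htend, Eventually.of_forall fun n => hx (ψ n)⟩)
  have heq : (1 - ζ) + ζ * ρ a - a = 0 := by
    have h1 : Tendsto (fun n => (1 - ζ) + ζ * ρ (x (ψ n)) - x (ψ n)) atTop
        (nhds ((1 - ζ) + ζ * ρ a - a)) := by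
      exact ((tendsto_const_nhds.add (hρa.const_mul ζ)).sub htend)
    have h2 : Tendsto (fun n => (1 - ζ) + ζ * ρ (x (ψ n)) - x (ψ n)) atTop (nhds 0) :=
      hconv.comp hψ.tendsto_atTop
    exact tendsto_nhds_unique h1 h2
  -- algebra
  obtain ⟨hα0, hα1⟩ := hα
  obtain ⟨hζα, hζ1⟩ := hζ
  have hζ0 : 0 < ζ := hα0.trans hζα
  have hd : 0 < 1 - (1 - α) * a := by nlinarith [haI.1]
  have hle := hρle a haI
  have h2 : ρ a * (1 - (1 - α) * a) ≤ α * a := by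
    rw [← le_div_iff₀ hd]; exact hle
  rw [le_div_iff₀ (by linarith : (0:ℝ) < 1 - α)]
  nlinarith [mul_le_mul_of_nonneg_left h2 hζ0.le, mul_pos (by linarith : (0:ℝ) < 1 - a) hζ0]
end

section
/- For α ∈ (0,1), ζ ∈ (α,1), and all t ∈ ((1-ζ)/(1-α), 1), one has (1-ζ) + ζ·f_α^{-1}(t) < t; and for all t ∈ (0, (1-ζ)/(1-α)), one has (1-ζ) + ζ·f_α^{-1}(t) > t. -/
theorem ecdf_below_above_identity (α ζ : ℝ) (hα : α ∈ Set.Ioo (0:ℝ) 1)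
    (hζ : ζ ∈ Set.Ioo α 1) :
    (∀ t ∈ Set.Ioo ((1 - ζ) / (1 - α)) 1,
      (1 - ζ) + ζ * (α * t / (1 - (1 - α) * t)) < t) ∧
    (∀ t ∈ Set.Ioo (0:ℝ) ((1 - ζ) / (1 - α)),
      (1 - ζ) + ζ * (α * t / (1 - (1 - α) * t)) > t) := by
  obtain ⟨ha0, ha1⟩ := hα
  obtain ⟨hz0, hz1⟩ := hζ
  have h1a : (0:ℝ) < 1 - α := by linarith
  constructor
  · intro t ⟨ht0, ht1⟩
    have htc : (1 - ζ) < (1 - α) * t := by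
      rw [div_lt_iff₀ h1a] at ht0; linarith
    have hD : 0 < 1 - (1 - α) * t := by nlinarith
    have key : t - ((1 - ζ) + ζ * (α * t / (1 - (1 - α) * t)))
        = (1 - t) * ((1 - α) * t - (1 - ζ)) / (1 - (1 - α) * t) := by
      rw [eq_div_iff hD.ne', sub_mul, add_mul, mul_assoc ζ, div_mul_cancel₀ _ hD.ne']; ring
    have : 0 < t - ((1 - ζ) + ζ * (α * t / (1 - (1 - α) * t))) := by
      rw [key]
      exact div_pos (mul_pos (by linarith) (by linarith)) hD
    linarith
  · intro t ⟨ht0, ht1⟩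
    have htc : (1 - α) * t < 1 - ζ := by
      rw [lt_div_iff₀ h1a] at ht1; linarith
    have ht1' : t < 1 := by nlinarith
    have hD : 0 < 1 - (1 - α) * t := by nlinarith
    have key : ((1 - ζ) + ζ * (α * t / (1 - (1 - α) * t))) - t
        = (1 - t) * ((1 - ζ) - (1 - α) * t) / (1 - (1 - α) * t) := by
      rw [eq_div_iff hD.ne', sub_mul, add_mul, mul_assoc ζ, div_mul_cancel₀ _ hD.ne']; ring
    have : 0 < ((1 - ζ) + ζ * (α * t / (1 - (1 - α) * t))) - t := by
      rw [key]
      exact div_pos (mul_pos (by linarith) (by linarith)) hD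
    linarith
end
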